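/- Let F be a field with char(F) ≠ 2, and for λ ∈ F let A₆(λ) be the algebra on F³ with multiplication e₁·e₂ = e₂, e₁·e₃ = λe₃ (other basis products zero or determined by anti-commutativity). Then for every nonzero λ ∈ F, the algebras A₆(λ) and A₆(1/λ) are isomorphic. -/

import Mathlib

/-! The map `e₁ ↦ λe₁, e₂ ↦ e₃, e₃ ↦ e₂` is an isomorphism `A₆(λ) ≃ A₆(λ⁻¹)`:
in `A₆(λ⁻¹)` one has `(λe₁)·e₃ = e₃` and `(λe₁)·e₂ = λe₂`. -/

def mulA6 {F : Type*} [Field F] (l : F) (x y : Fin 3 → F) : Fin 3 → F :=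
  ![0,
    (x 0 * y 1 - x 1 * y 0),
    l * (x 0 * y 2 - x 2 * y 0)]

section

variable {F : Type*} [Field F] {l : F}

def scaleSwapA6 (hl : l ≠ 0) : (Fin 3 → F) ≃ₗ[F] (Fin 3 → F) where
  toFun x := ![l * x 0, x 2, x 1]
  invFun x := ![l⁻¹ * x 0, x 2, x 1]
  map_add' x y := by ext i; fin_cases i <;> simp [mul_add]
  map_smul' c x := by ext i; fin_cases i <;> simp [mul_left_comm]
  left_inv x := by ext i; fin_cases i <;> simp [hl]
  right_inv x := by ext i; fin_cases i <;> simp [hl]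

theorem scaleSwapA6_apply (hl : l ≠ 0) (x : Fin 3 → F) :
    scaleSwapA6 hl x = ![l * x 0, x 2, x 1] :=
  rfl

theorem scaleSwapA6_mulA6 (hl : l ≠ 0) (x y : Fin 3 → F) :
    scaleSwapA6 hl (mulA6 l x y) = mulA6 l⁻¹ (scaleSwapA6 hl x) (scaleSwapA6 hl y) := by
  ext i
  fin_cases i <;> simp [scaleSwapA6_apply, mulA6] <;> field_simp

end

theorem A6_lambda_iso_A6_inv_lambda_general
    (F : Type*) [Field F]
    (l : F) (hl : l ≠ 0) :
    ∃ g : (Fin 3 → F) ≃ₗ[F] (Fin 3 → F),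
      ∀ x y : Fin 3 → F, g (mulA6 l x y) = mulA6 l⁻¹ (g x) (g y) :=
  ⟨scaleSwapA6 hl, scaleSwapA6_mulA6 hl⟩

theorem A6_lambda_iso_A6_inv_lambda
    (F : Type*) [Field F] (hchar : ringChar F ≠ 2)
    (l : F) (hl : l ≠ 0) :
    ∃ g : (Fin 3 → F) ≃ₗ[F] (Fin 3 → F),
      ∀ x y : Fin 3 → F, g (mulA6 l x y) = mulA6 l⁻¹ (g x) (g y) :=
  A6_lambda_iso_A6_inv_lambda_general F l hl
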